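/- For every fixed ε > 0 there is a constant C(ε) such that, with the notation of the context, for every admissible pair (q, κ) one has #S(q, κ) ≤ C(ε) · Y₁Y₂Y₃^{−1}B^ε. -/

import Mathlib

/-!
Write q = y₃. As q is coprime to x₂y₂, the equation and x₁y₁ + κx₂y₂ ≡ 0 (mod q) give
a₁κ²y₁ + a₂y₂ ≡ 0 (mod q), so any two elements satisfy y₁y₂' ≡ y₁'y₂ (mod q). The slopes y₂/y₁
of distinct pairs (y₁, y₂) are therefore at least q/Y₁² apart, and at most 2Y₁Y₂/q + 1 such
pairs occur. For a fixed pair (y₁, y₂), eliminating between the equations of two elements gives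
q³ ∣ 4(x₁x₂' − x₁'x₂); once B^(2/15) ≥ 32 this is smaller than q³ in absolute value, so
(y₁, y₂) determines (x₁, x₂). For smaller B all coordinates are at most 1024.
-/

/-- The set `S₀(B)` of sextuples `(x₁, x₂, x₃, y₁, y₂, y₃)` of positive integers (encoded as a
pair of functions `Fin 3 → ℤ`) such that `Xᵢ/2 < xᵢ ≤ Xᵢ` and `Yᵢ/2 < yᵢ ≤ Yᵢ`, the equation
`a₁x₁²y₁³ + a₂x₂²y₂³ + a₃x₃²y₃³ = 0` holds, `gcd(x₁y₁, x₂y₂, x₃y₃) = 1`,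
`gcd(a₁a₂a₃, x₁x₂x₃y₁y₂y₃) = 1`, and `a₁y₁, a₂y₂, a₃y₃` are all squarefree. -/
def S0 (a : Fin 3 → ℤ) (X Y : Fin 3 → ℝ) : Set ((Fin 3 → ℤ) × (Fin 3 → ℤ)) :=
  {p | (∀ i, 0 < p.1 i) ∧ (∀ i, 0 < p.2 i) ∧
    (∀ i, X i / 2 < (p.1 i : ℝ) ∧ (p.1 i : ℝ) ≤ X i) ∧
    (∀ i, Y i / 2 < (p.2 i : ℝ) ∧ (p.2 i : ℝ) ≤ Y i) ∧
    a 0 * p.1 0 ^ 2 * p.2 0 ^ 3 + a 1 * p.1 1 ^ 2 * p.2 1 ^ 3 +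
      a 2 * p.1 2 ^ 2 * p.2 2 ^ 3 = 0 ∧
    Int.gcd (p.1 0 * p.2 0) (Int.gcd (p.1 1 * p.2 1) (p.1 2 * p.2 2)) = 1 ∧
    Int.gcd (a 0 * a 1 * a 2) (p.1 0 * p.1 1 * p.1 2 * p.2 0 * p.2 1 * p.2 2) = 1 ∧
    (∀ i, Squarefree (a i * p.2 i))}

/-- The set `S(q, κ)` of quadruples `(x₁, x₂, y₁, y₂)` of positive integers satisfying
`x₁y₁ + κx₂y₂ ≡ 0 (mod q)` and such that `(x₁, x₂, x₃, y₁, y₂, q) ∈ S₀(B)` for some positive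
integer `x₃`. -/
def SqK (a : Fin 3 → ℤ) (X Y : Fin 3 → ℝ) (q κ : ℤ) : Set (ℤ × ℤ × ℤ × ℤ) :=
  {t | ∃ x₁ x₂ y₁ y₂ : ℤ, t = (x₁, x₂, y₁, y₂) ∧
    0 < x₁ ∧ 0 < x₂ ∧ 0 < y₁ ∧ 0 < y₂ ∧
    q ∣ x₁ * y₁ + κ * x₂ * y₂ ∧
    ∃ x₃ : ℤ, 0 < x₃ ∧ (![x₁, x₂, x₃], ![y₁, y₂, q]) ∈ S0 a X Y}

theorem Int.isCoprime_of_forall_prime_dvd {m n : ℤ}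
    (h : ∀ p : ℤ, Prime p → p ∣ m → ¬ p ∣ n) : IsCoprime m n :=
  isCoprime_of_prime_dvd
    (fun ⟨hm, hn⟩ => h 2 Int.prime_two (hm ▸ dvd_zero 2) (hn ▸ dvd_zero 2)) h

theorem Prime.dvd_mul_of_dvd_sq_mul_cube {M : Type*} [CommMonoidWithZero M] {p x u : M}
    (hp : Prime p) (h : p ∣ x ^ 2 * u ^ 3) : p ∣ x * u :=
  hp.dvd_of_dvd_pow (n := 3) (h.trans ⟨x, by simp only [pow_succ, pow_zero]; ac_rfl⟩)

-- The factor 4 covers p = 2, which may divide both D and S.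
theorem Prime.pow_three_dvd_four_mul {R : Type*} [CommRing R] [IsDomain R] [IsBezout R]
    {p D S P : R} (hp : Prime p) (hDS : p ^ 3 ∣ D * S) (hD : p ∣ D) (hsum : D + S = 2 * P)
    (hP : ¬ p ∣ P) : p ^ 3 ∣ 4 * D := by
  by_cases hS : p ∣ S
  · have hp2 : p ∣ 2 := (hp.dvd_or_dvd (hsum ▸ dvd_add hD hS)).resolve_right hP
    have h4 : p ^ 2 ∣ 4 := by
      simpa [show (2 : R) ^ 2 = 4 by norm_num] using pow_dvd_pow_of_dvd hp2 2
    simpa [pow_succ] using mul_dvd_mul h4 hD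
  · exact dvd_mul_of_dvd_right
      (((hp.coprime_iff_not_dvd.2 hS).pow_left).dvd_of_dvd_mul_right hDS) 4

theorem Squarefree.pow_dvd_of_forall_prime_dvd {q m : ℤ} (hq : Squarefree q) (k : ℕ)
    (h : ∀ p : ℤ, Prime p → p ∣ q → p ^ k ∣ m) : q ^ k ∣ m := by
  rw [← Int.natAbs_dvd, Int.natAbs_pow, Nat.cast_pow,
    ← Nat.prod_primeFactors_of_squarefree (Int.squarefree_natAbs.2 hq), Nat.cast_prod,
    ← Finset.prod_pow]
  refine Finset.prod_dvd_of_coprime (fun p hp p' hp' hne => ?_) (fun p hp => ?_)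
  · exact (Nat.isCoprime_iff_coprime.2 ((Nat.coprime_primes (Nat.prime_of_mem_primeFactors hp)
      (Nat.prime_of_mem_primeFactors hp')).2 hne)).pow
  · exact h p (Nat.prime_iff_prime_int.1 (Nat.prime_of_mem_primeFactors hp))
      (Int.natCast_dvd.2 (Nat.dvd_of_mem_primeFactors hp))

theorem Int.eq_and_eq_of_mul_eq_mul {a b c d : ℤ} (hab : IsCoprime a b) (hcd : IsCoprime c d)
    (ha : 0 < a) (hc : 0 < c) (h : a * d = c * b) : a = c ∧ b = d := by
  have hac : a = c := Int.dvd_antisymm ha.le hc.le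
    (hab.dvd_of_dvd_mul_left ⟨d, by rw [h, mul_comm]⟩)
    (hcd.dvd_of_dvd_mul_left ⟨b, by rw [← h, mul_comm]⟩)
  subst hac
  exact ⟨rfl, (mul_left_cancel₀ ha.ne' h).symm⟩

section CubicEquation

variable {a b c x y z u v w : ℤ}

theorem isCoprime_mul_of_cubic_eq_zero
    (heq : a * x ^ 2 * u ^ 3 + b * y ^ 2 * v ^ 3 + c * z ^ 2 * w ^ 3 = 0)
    (hprim : ∀ p : ℤ, Prime p → p ∣ x * u → p ∣ y * v → ¬ p ∣ z * w)
    (hwb : IsCoprime w b) : IsCoprime w (x * u) := by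
  refine Int.isCoprime_of_forall_prime_dvd fun p hp hpw hpxu => ?_
  have hpb : ¬ p ∣ b := fun h => hp.not_isUnit (hwb.isUnit_of_dvd' hpw h)
  have hpB : p ∣ b * (y ^ 2 * v ^ 3) := by
    rw [show b * (y ^ 2 * v ^ 3) = -(x * u * (a * x * u ^ 2)) - w * (c * z ^ 2 * w ^ 2) by
      linear_combination heq]
    exact dvd_sub (dvd_neg.2 (hpxu.mul_right _)) (hpw.mul_right _)
  exact hprim p hp hpxu (hp.dvd_mul_of_dvd_sq_mul_cube ((hp.dvd_or_dvd hpB).resolve_left hpb))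
    (hpw.mul_left z)

theorem isCoprime_mul_mul_of_cubic_eq_zero
    (heq : a * x ^ 2 * u ^ 3 + b * y ^ 2 * v ^ 3 + c * z ^ 2 * w ^ 3 = 0)
    (hprim : ∀ p : ℤ, Prime p → p ∣ x * u → p ∣ y * v → ¬ p ∣ z * w)
    (hc : IsCoprime c (x * u)) (hw : IsCoprime w (x * u)) : IsCoprime (x * u) (y * v) := by
  refine Int.isCoprime_of_forall_prime_dvd fun p hp hpxu hpyv => ?_
  have hpC : p ∣ c * z ^ 2 * w ^ 3 := by
    rw [show c * z ^ 2 * w ^ 3 = -(x * u * (a * x * u ^ 2)) - y * v * (b * y * v ^ 2) by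
      linear_combination heq]
    exact dvd_sub (dvd_neg.2 (hpxu.mul_right _)) (hpyv.mul_right _)
  have hpc : ¬ p ∣ c := fun h => hp.not_isUnit (hc.isUnit_of_dvd' h hpxu)
  have hpw : ¬ p ∣ w := fun h => hp.not_isUnit (hw.isUnit_of_dvd' h hpxu)
  have hpz : p ∣ z := by
    rcases hp.dvd_or_dvd hpC with h | h
    · exact hp.dvd_of_dvd_pow ((hp.dvd_or_dvd h).resolve_left hpc)
    · exact absurd (hp.dvd_of_dvd_pow h) hpw
  exact hprim p hp hpxu hpyv (hpz.mul_right w)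

theorem dvd_of_cubic_eq_zero {κ q : ℤ}
    (heq : a * x ^ 2 * u ^ 3 + b * y ^ 2 * v ^ 3 + c * z ^ 2 * q ^ 3 = 0)
    (hqyv : IsCoprime q (y * v)) (hκ : q ∣ x * u + κ * y * v) : q ∣ a * κ ^ 2 * u + b * v := by
  have key : (y * v) ^ 2 * (a * κ ^ 2 * u + b * v) =
      a * u * (κ * y * v - x * u) * (x * u + κ * y * v) - q * (c * z ^ 2 * q ^ 2) := by
    linear_combination heq
  refine (hqyv.pow_right (n := 2)).dvd_of_dvd_mul_left ?_
  rw [key]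
  exact dvd_sub (hκ.mul_left _) (dvd_mul_right q _)

theorem pow_three_dvd_of_cubic_eq_zero {κ q x' y' z' : ℤ} (hq : Squarefree q)
    (heq : a * x ^ 2 * u ^ 3 + b * y ^ 2 * v ^ 3 + c * z ^ 2 * q ^ 3 = 0)
    (heq' : a * x' ^ 2 * u ^ 3 + b * y' ^ 2 * v ^ 3 + c * z' ^ 2 * q ^ 3 = 0)
    (hκ : q ∣ x * u + κ * y * v) (hκ' : q ∣ x' * u + κ * y' * v)
    (hqau : IsCoprime q (a * u)) (hqx : IsCoprime q x) (hqy' : IsCoprime q y') :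
    q ^ 3 ∣ 4 * (x * y' - x' * y) := by
  have hD : q ∣ x * y' - x' * y := by
    refine hqau.of_mul_right_right.dvd_of_dvd_mul_left ?_
    rw [show u * (x * y' - x' * y) = y' * (x * u + κ * y * v) - y * (x' * u + κ * y' * v) by ring]
    exact dvd_sub (hκ.mul_left _) (hκ'.mul_left _)
  have hDS : q ^ 3 ∣ (x * y' - x' * y) * (x * y' + x' * y) := by
    have hq3 : IsCoprime (q ^ 3) (a * u ^ 3) :=
      (hqau.of_mul_right_left.mul_right hqau.of_mul_right_right.pow_right).pow_left
    refine hq3.dvd_of_dvd_mul_left ?_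
    rw [show a * u ^ 3 * ((x * y' - x' * y) * (x * y' + x' * y)) =
        q ^ 3 * -(c * (z ^ 2 * y' ^ 2 - z' ^ 2 * y ^ 2)) by
      linear_combination y' ^ 2 * heq - y ^ 2 * heq']
    exact dvd_mul_right _ _
  refine hq.pow_dvd_of_forall_prime_dvd 3 fun p hp hpq => hp.pow_three_dvd_four_mul
    ((pow_dvd_pow_of_dvd hpq 3).trans hDS) (hpq.trans hD) (P := x * y') (by ring) fun h => ?_
  rcases hp.dvd_or_dvd h with h | h
  · exact hp.not_isUnit (hqx.isUnit_of_dvd' hpq h)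
  · exact hp.not_isUnit (hqy'.isUnit_of_dvd' hpq h)

end CubicEquation

theorem Set.ncard_le_floor_div_add_one {α : Type*} {S : Set α} (f : α → ℝ) {δ L : ℝ}
    (hδ : 0 < δ) (hf : ∀ t ∈ S, 0 ≤ f t ∧ f t ≤ L)
    (hsep : ∀ t ∈ S, ∀ t' ∈ S, |f t - f t'| < δ → t = t') : S.ncard ≤ ⌊L / δ⌋₊ + 1 := by
  calc S.ncard ≤ (Finset.range (⌊L / δ⌋₊ + 1) : Set ℕ).ncard := by
        refine Set.ncard_le_ncard_of_injOn (fun t => ⌊f t / δ⌋₊) (fun t ht => ?_)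
          (fun t ht t' ht' h => hsep t ht t' ht' ?_)
        · exact Finset.mem_coe.2 (Finset.mem_range.2 (Nat.lt_succ_of_le
            (Nat.floor_le_floor (div_le_div_of_nonneg_right (hf t ht).2 hδ.le))))
        · have h₀ := div_nonneg (hf t ht).1 hδ.le
          have h₀' := div_nonneg (hf t' ht').1 hδ.le
          have hfl : (⌊f t / δ⌋₊ : ℝ) = ⌊f t' / δ⌋₊ := congrArg Nat.cast h
          have : |f t / δ - f t' / δ| < 1 := abs_sub_lt_iff.2
            ⟨by linarith [Nat.lt_floor_add_one (f t / δ), Nat.floor_le h₀'],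
              by linarith [Nat.lt_floor_add_one (f t' / δ), Nat.floor_le h₀]⟩
          rwa [← sub_div, abs_div, abs_of_pos hδ, div_lt_one hδ] at this
    _ = ⌊L / δ⌋₊ + 1 := by simp

section SqK

variable {a : Fin 3 → ℤ} {X Y : Fin 3 → ℝ} {q κ x₁ x₂ y₁ y₂ : ℤ}

theorem exists_cubic_eq_zero_of_mem_SqK (h : (x₁, x₂, y₁, y₂) ∈ SqK a X Y q κ) :
    q ∣ x₁ * y₁ + κ * x₂ * y₂ ∧ ∃ x₃ : ℤ,
      a 0 * x₁ ^ 2 * y₁ ^ 3 + a 1 * x₂ ^ 2 * y₂ ^ 3 + a 2 * x₃ ^ 2 * q ^ 3 = 0 ∧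
      (∀ p : ℤ, Prime p → p ∣ x₁ * y₁ → p ∣ x₂ * y₂ → ¬ p ∣ x₃ * q) ∧
      IsCoprime (a 2) (x₁ * y₁) := by
  obtain ⟨_, _, _, _, he, -, -, -, -, hdvd, x₃, -, -, -, -, -, heq, hg₁, hg₂, -⟩ := h
  simp only [Prod.mk.injEq] at he
  obtain ⟨rfl, rfl, rfl, rfl⟩ := he
  simp only [Matrix.cons_val_zero, Matrix.cons_val_one, Matrix.cons_val] at heq hg₁ hg₂
  refine ⟨hdvd, x₃, heq, fun p hp h₁ h₂ h₃ => hp.not_isUnit ?_, ?_⟩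
  · exact (Int.isCoprime_iff_gcd_eq_one.2 hg₁).isUnit_of_dvd' h₁ (Int.dvd_coe_gcd h₂ h₃)
  · exact (Int.isCoprime_iff_gcd_eq_one.2 hg₂).of_isCoprime_of_dvd_left (dvd_mul_left _ _)
      |>.of_isCoprime_of_dvd_right ⟨x₂ * x₃ * y₂ * q, by ring⟩

theorem bounds_of_mem_SqK (h : (x₁, x₂, y₁, y₂) ∈ SqK a X Y q κ) :
    0 < x₁ ∧ 0 < x₂ ∧ 0 < y₁ ∧ 0 < y₂ ∧ (x₁ : ℝ) ≤ X 0 ∧ (x₂ : ℝ) ≤ X 1 ∧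
      Y 0 / 2 < y₁ ∧ (y₁ : ℝ) ≤ Y 0 ∧ (y₂ : ℝ) ≤ Y 1 := by
  obtain ⟨_, _, _, _, he, hx₁, hx₂, hy₁, hy₂, -, x₃, -, -, -, hX, hY, -⟩ := h
  simp only [Prod.mk.injEq] at he
  obtain ⟨rfl, rfl, rfl, rfl⟩ := he
  exact ⟨hx₁, hx₂, hy₁, hy₂, (hX 0).2, (hX 1).2, (hY 0).1, (hY 0).2, (hY 1).2⟩

theorem isCoprime_of_mem_SqK (h : (x₁, x₂, y₁, y₂) ∈ SqK a X Y q κ)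
    (hqa : IsCoprime q (a 0 * a 1)) :
    IsCoprime q (x₁ * y₁) ∧ IsCoprime q (x₂ * y₂) ∧ IsCoprime (x₁ * y₁) (x₂ * y₂) := by
  obtain ⟨-, x₃, heq, hprim, ha₂⟩ := exists_cubic_eq_zero_of_mem_SqK h
  have hq₁ := isCoprime_mul_of_cubic_eq_zero heq hprim hqa.of_mul_right_right
  refine ⟨hq₁, ?_, isCoprime_mul_mul_of_cubic_eq_zero heq hprim ha₂ hq₁⟩
  exact isCoprime_mul_of_cubic_eq_zero
    (show a 1 * x₂ ^ 2 * y₂ ^ 3 + a 0 * x₁ ^ 2 * y₁ ^ 3 + a 2 * x₃ ^ 2 * q ^ 3 = 0 by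
      linear_combination heq)
    (fun p hp h₂ h₁ => hprim p hp h₁ h₂) hqa.of_mul_right_left

theorem dvd_of_mem_SqK (h : (x₁, x₂, y₁, y₂) ∈ SqK a X Y q κ)
    (hqa : IsCoprime q (a 0 * a 1)) : q ∣ a 0 * κ ^ 2 * y₁ + a 1 * y₂ := by
  obtain ⟨hκ, x₃, heq, -⟩ := exists_cubic_eq_zero_of_mem_SqK h
  exact dvd_of_cubic_eq_zero heq (isCoprime_of_mem_SqK h hqa).2.1 hκ

theorem eq_of_mem_SqK_of_mem_SqK {x₁' x₂' : ℤ} (h : (x₁, x₂, y₁, y₂) ∈ SqK a X Y q κ)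
    (h' : (x₁', x₂', y₁, y₂) ∈ SqK a X Y q κ) (hq : Squarefree q)
    (hqa : IsCoprime q (a 0 * a 1)) (hX : 4 * X 0 * X 1 < (q : ℝ) ^ 3) :
    x₁ = x₁' ∧ x₂ = x₂' := by
  obtain ⟨hκ, x₃, heq, -⟩ := exists_cubic_eq_zero_of_mem_SqK h
  obtain ⟨hκ', x₃', heq', -⟩ := exists_cubic_eq_zero_of_mem_SqK h'
  obtain ⟨hq₁, -, hcop⟩ := isCoprime_of_mem_SqK h hqa
  obtain ⟨-, hq₂', hcop'⟩ := isCoprime_of_mem_SqK h' hqa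
  obtain ⟨hx₁, hx₂, -, -, hx₁X, hx₂X, -⟩ := bounds_of_mem_SqK h
  obtain ⟨hx₁', hx₂', -, -, hx₁X', hx₂X', -⟩ := bounds_of_mem_SqK h'
  have hD := pow_three_dvd_of_cubic_eq_zero hq heq heq' hκ hκ'
    (hqa.of_mul_right_left.mul_right hq₁.of_mul_right_right) hq₁.of_mul_right_left
    hq₂'.of_mul_right_left
  have hsmall : |4 * (x₁ * x₂' - x₁' * x₂)| < q ^ 3 := by
    have hpos : ∀ {n : ℤ}, 0 < n → (0 : ℝ) ≤ n := fun hn => Int.cast_nonneg hn.le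
    have h₁ : (x₁ : ℝ) * x₂' ≤ X 0 * X 1 :=
      mul_le_mul hx₁X hx₂X' (hpos hx₂') ((hpos hx₁).trans hx₁X)
    have h₂ : (x₁' : ℝ) * x₂ ≤ X 0 * X 1 :=
      mul_le_mul hx₁X' hx₂X (hpos hx₂) ((hpos hx₁).trans hx₁X)
    have : |4 * ((x₁ : ℝ) * x₂' - x₁' * x₂)| < (q : ℝ) ^ 3 := by
      rw [abs_mul, abs_of_pos four_pos]
      linarith [abs_sub_le_of_nonneg_of_le (mul_nonneg (hpos hx₁) (hpos hx₂')) h₁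
        (mul_nonneg (hpos hx₁') (hpos hx₂)) h₂]
    exact_mod_cast this
  have hx : x₁ * x₂' = x₁' * x₂ := by
    linarith [Int.eq_zero_of_abs_lt_dvd hD hsmall]
  exact Int.eq_and_eq_of_mul_eq_mul hcop.of_mul_left_left.of_mul_right_left
    hcop'.of_mul_left_left.of_mul_right_left hx₁ hx₁' hx

theorem snd_eq_of_mem_SqK {x₁' x₂' y₁' y₂' : ℤ} (h : (x₁, x₂, y₁, y₂) ∈ SqK a X Y q κ)
    (h' : (x₁', x₂', y₁', y₂') ∈ SqK a X Y q κ) (hqa : IsCoprime q (a 0 * a 1))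
    (hclose : |(y₂ : ℝ) / y₁ - y₂' / y₁'| < q / Y 0 ^ 2) : y₁ = y₁' ∧ y₂ = y₂' := by
  obtain ⟨-, -, hy₁, -, -, -, -, hy₁Y, -⟩ := bounds_of_mem_SqK h
  obtain ⟨-, -, hy₁', -, -, -, -, hy₁Y', -⟩ := bounds_of_mem_SqK h'
  have hy₁R : (0 : ℝ) < y₁ := Int.cast_pos.2 hy₁
  have hy₁R' : (0 : ℝ) < y₁' := Int.cast_pos.2 hy₁'
  have hdvd : q ∣ y₁ * y₂' - y₁' * y₂ := by
    refine hqa.of_mul_right_right.dvd_of_dvd_mul_left ?_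
    rw [show a 1 * (y₁ * y₂' - y₁' * y₂) =
        y₁ * (a 0 * κ ^ 2 * y₁' + a 1 * y₂') - y₁' * (a 0 * κ ^ 2 * y₁ + a 1 * y₂) by ring]
    exact dvd_sub ((dvd_of_mem_SqK h' hqa).mul_left _) ((dvd_of_mem_SqK h hqa).mul_left _)
  have hsmall : |y₁ * y₂' - y₁' * y₂| < q := by
    have : |(y₁ : ℝ) * y₂' - y₁' * y₂| < q := calc
      _ = |(y₂ : ℝ) / y₁ - y₂' / y₁'| * (y₁ * y₁') := by
        rw [← abs_of_pos (mul_pos hy₁R hy₁R'), ← abs_mul, ← abs_neg]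
        congr 1
        field_simp
        ring
      _ < q / Y 0 ^ 2 * (y₁ * y₁') := mul_lt_mul_of_pos_right hclose (by positivity)
      _ ≤ q / Y 0 ^ 2 * Y 0 ^ 2 := by
        refine mul_le_mul_of_nonneg_left ?_ ((abs_nonneg _).trans hclose.le)
        rw [sq]
        exact mul_le_mul hy₁Y hy₁Y' hy₁R'.le (hy₁R.le.trans hy₁Y)
      _ = q := div_mul_cancel₀ _ (pow_ne_zero 2 (hy₁R.trans_le hy₁Y).ne')
    exact_mod_cast this
  exact Int.eq_and_eq_of_mul_eq_mul
    (isCoprime_of_mem_SqK h hqa).2.2.of_mul_left_right.of_mul_right_right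
    (isCoprime_of_mem_SqK h' hqa).2.2.of_mul_left_right.of_mul_right_right hy₁ hy₁'
    (by linarith [Int.eq_zero_of_abs_lt_dvd hdvd hsmall])

theorem ncard_SqK_le_of_lt (hq : Squarefree q) (hq₀ : 0 < q) (hqa : IsCoprime q (a 0 * a 1))
    (hY₀ : 0 < Y 0) (hX : 4 * X 0 * X 1 < (q : ℝ) ^ 3) :
    (SqK a X Y q κ).ncard ≤ ⌊2 * Y 0 * Y 1 / q⌋₊ + 1 := by
  have hδ : (0 : ℝ) < q / Y 0 ^ 2 := div_pos (Int.cast_pos.2 hq₀) (by positivity)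
  convert Set.ncard_le_floor_div_add_one (fun t : ℤ × ℤ × ℤ × ℤ => (t.2.2.2 : ℝ) / t.2.2.1)
    (L := 2 * Y 1 / Y 0) hδ ?_ ?_ using 3
  · field_simp
  · rintro ⟨x₁, x₂, y₁, y₂⟩ ht
    obtain ⟨-, -, hy₁, hy₂, -, -, hy₁Y, -, hy₂Y⟩ := bounds_of_mem_SqK ht
    have hy₁R : (0 : ℝ) < y₁ := Int.cast_pos.2 hy₁
    refine ⟨div_nonneg (Int.cast_nonneg hy₂.le) hy₁R.le, ?_⟩
    rw [div_le_div_iff₀ hy₁R hY₀]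
    calc (y₂ : ℝ) * Y 0 ≤ Y 1 * Y 0 := mul_le_mul_of_nonneg_right hy₂Y hY₀.le
      _ ≤ Y 1 * (2 * y₁) :=
        mul_le_mul_of_nonneg_left (by linarith) ((Int.cast_nonneg hy₂.le).trans hy₂Y)
      _ = 2 * Y 1 * y₁ := by ring
  · rintro ⟨x₁, x₂, y₁, y₂⟩ ht ⟨x₁', x₂', y₁', y₂'⟩ ht' hclose
    obtain ⟨rfl, rfl⟩ := snd_eq_of_mem_SqK ht ht' hqa hclose
    obtain ⟨rfl, rfl⟩ := eq_of_mem_SqK_of_mem_SqK ht ht' hq hqa hX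
    rfl

theorem ncard_SqK_le_pow (N : ℕ) (hX₀ : X 0 ≤ N) (hX₁ : X 1 ≤ N) (hY₀ : Y 0 ≤ N)
    (hY₁ : Y 1 ≤ N) : (SqK a X Y q κ).ncard ≤ N ^ 4 := by
  set I := Finset.Icc (1 : ℤ) N
  calc (SqK a X Y q κ).ncard ≤ (↑(I ×ˢ I ×ˢ I ×ˢ I) : Set (ℤ × ℤ × ℤ × ℤ)).ncard := by
        refine Set.ncard_le_ncard (fun t ht => ?_) (Finset.finite_toSet _)
        obtain ⟨x₁, x₂, y₁, y₂⟩ := t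
        obtain ⟨hx₁, hx₂, hy₁, hy₂, hx₁X, hx₂X, -, hy₁Y, hy₂Y⟩ := bounds_of_mem_SqK ht
        have hle : ∀ {n : ℤ} {Z : ℝ}, (n : ℝ) ≤ Z → Z ≤ N → n ≤ N := fun h hZ => by
          exact_mod_cast h.trans hZ
        simp only [Finset.coe_product, Set.mem_prod, Finset.mem_coe, Finset.mem_Icc, I]
        exact ⟨⟨hx₁, hle hx₁X hX₀⟩, ⟨hx₂, hle hx₂X hX₁⟩, ⟨hy₁, hle hy₁Y hY₀⟩, hy₂, hle hy₂Y hY₁⟩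
    _ = N ^ 4 := by
      simp only [Set.ncard_coe_finset, Finset.card_product, Int.card_Icc, add_sub_cancel_right,
        Int.toNat_natCast, I]
      ring
theorem ncard_SqK_le_of_pow_bounds_of_le {b : ℝ} (hb : 0 < b) (hbig : 32 ≤ b ^ 24)
    (hX : ∀ i, b ^ 33 ≤ X i ∧ X i ≤ b ^ 39) (hY : ∀ i, b ^ 34 ≤ Y i) (hq : Squarefree q)
    (hq₂ : Y 2 / 2 < q) (hqa : IsCoprime q (a 0 * a 1)) :
    ((SqK a X Y q κ).ncard : ℝ) ≤ 4 * (Y 0 * Y 1 * (Y 2)⁻¹) + 1 := by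
  have hY₀ : ∀ i, 0 < Y i := fun i => (pow_pos hb 34).trans_le (hY i)
  have hY₂ : 0 < Y 2 / 2 := div_pos (hY₀ 2) two_pos
  have hqR : (0 : ℝ) < q := hY₂.trans hq₂
  have hX₄ : 4 * X 0 * X 1 < (q : ℝ) ^ 3 := calc
    4 * X 0 * X 1 ≤ 4 * b ^ 39 * b ^ 39 :=
      mul_le_mul (mul_le_mul_of_nonneg_left (hX 0).2 (by norm_num)) (hX 1).2
        ((pow_pos hb 33).le.trans (hX 1).1) (by positivity)
    _ = 4 * b ^ 78 := by ring
    _ ≤ b ^ 24 * b ^ 78 / 8 := by linarith [mul_le_mul_of_nonneg_right hbig (pow_pos hb 78).le]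
    _ = (b ^ 34) ^ 3 / 8 := by ring
    _ ≤ Y 2 ^ 3 / 8 := by gcongr; exact hY 2
    _ = (Y 2 / 2) ^ 3 := by ring
    _ < (q : ℝ) ^ 3 := pow_lt_pow_left₀ hq₂ hY₂.le (by norm_num)
  have hYY : 0 ≤ 2 * Y 0 * Y 1 := (mul_pos (mul_pos two_pos (hY₀ 0)) (hY₀ 1)).le
  calc ((SqK a X Y q κ).ncard : ℝ) ≤ ((⌊2 * Y 0 * Y 1 / q⌋₊ + 1 : ℕ) : ℝ) := by
        exact_mod_cast ncard_SqK_le_of_lt hq (Int.cast_pos.1 hqR) hqa (hY₀ 0) hX₄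
    _ ≤ 2 * Y 0 * Y 1 / q + 1 := by
      push_cast
      exact add_le_add_left (Nat.floor_le (div_nonneg hYY hqR.le)) 1
    _ ≤ 2 * Y 0 * Y 1 / (Y 2 / 2) + 1 := by gcongr
    _ = 4 * (Y 0 * Y 1 * (Y 2)⁻¹) + 1 := by field_simp; ring

theorem ncard_SqK_le_of_pow_bounds {b : ℝ} (hb : 1 ≤ b) (hX : ∀ i, b ^ 33 ≤ X i ∧ X i ≤ b ^ 39)
    (hY : ∀ i, b ^ 34 ≤ Y i ∧ Y i ≤ b ^ 38) (hq : Squarefree q) (hq₂ : Y 2 / 2 < q)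
    (hqa : IsCoprime q (a 0 * a 1)) :
    ((SqK a X Y q κ).ncard : ℝ) ≤ 2 ^ 40 * (Y 0 * Y 1 * (Y 2)⁻¹) := by
  have hb₀ : 0 < b := one_pos.trans_le hb
  have hY₀ : ∀ i, 0 < Y i := fun i => (pow_pos hb₀ 34).trans_le (hY i).1
  have hratio : 1 ≤ Y 0 * Y 1 * (Y 2)⁻¹ := by
    rw [← mul_inv_cancel₀ (hY₀ 2).ne']
    refine mul_le_mul_of_nonneg_right ?_ (inv_nonneg.2 (hY₀ 2).le)
    calc Y 2 ≤ b ^ 38 := (hY 2).2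
      _ ≤ b ^ 34 * b ^ 34 := by rw [← pow_add]; exact pow_le_pow_right₀ hb (by norm_num)
      _ ≤ Y 0 * Y 1 := mul_le_mul (hY 0).1 (hY 1).1 (pow_pos hb₀ 34).le (hY₀ 0).le
  rcases le_or_gt 32 (b ^ 24) with hbig | hsmall
  · linarith [ncard_SqK_le_of_pow_bounds_of_le (κ := κ) hb₀ hbig hX (fun i => (hY i).1) hq hq₂
      hqa]
  · have h₄₈ : b ^ 48 ≤ (1024 : ℕ) := calc
      b ^ 48 = (b ^ 24) ^ 2 := by ring
      _ ≤ 32 ^ 2 := pow_le_pow_left₀ (pow_pos hb₀ 24).le hsmall.le 2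
      _ = (1024 : ℕ) := by norm_num
    have hN : ∀ i, X i ≤ (1024 : ℕ) ∧ Y i ≤ (1024 : ℕ) := fun i =>
      ⟨((hX i).2.trans (pow_le_pow_right₀ hb (by norm_num))).trans h₄₈,
        ((hY i).2.trans (pow_le_pow_right₀ hb (by norm_num))).trans h₄₈⟩
    calc ((SqK a X Y q κ).ncard : ℝ) ≤ ((1024 ^ 4 : ℕ) : ℝ) := by
          exact_mod_cast ncard_SqK_le_pow 1024 (hN 0).1 (hN 1).1 (hN 0).2 (hN 1).2
      _ ≤ 2 ^ 40 * (Y 0 * Y 1 * (Y 2)⁻¹) := by push_cast; linarith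

end SqK

/-- For every `ε > 0` there is a constant `C(ε)` such that for every admissible pair `(q, κ)`
one has `#S(q, κ) ≤ C(ε) Y₁Y₂Y₃^{-1} B^ε`. -/
theorem SqK_bound (ε : ℝ) (hε : 0 < ε) :
    ∃ C : ℝ, 0 < C ∧ ∀ (a : Fin 3 → ℤ) (X Y : Fin 3 → ℝ) (B : ℝ),
      2 ≤ B → (∀ i, a i ≠ 0) → (∀ i, Squarefree (a i)) →
      (∀ i j, i ≠ j → IsCoprime (a i) (a j)) →
      (∀ i, 1 ≤ X i) → (∀ i, 1 ≤ Y i) →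
      (∀ i, X i ^ 2 * Y i ^ 3 ≤ 32 * B / |(a i : ℝ)|) →
      (∀ i, B ^ ((1 : ℝ) / 5 - 1 / 60) ≤ X i ∧ X i ≤ B ^ ((1 : ℝ) / 5 + 1 / 60)) →
      (∀ i, B ^ ((1 : ℝ) / 5 - 1 / 90) ≤ Y i ∧ Y i ≤ B ^ ((1 : ℝ) / 5 + 1 / 90)) →
      ∀ q κ : ℤ, Squarefree q → Y 2 / 2 < (q : ℝ) → (q : ℝ) ≤ Y 2 →
        IsCoprime q (a 0 * a 1) → IsCoprime κ q →
        ((SqK a X Y q κ).ncard : ℝ) ≤ C * (Y 0 * Y 1 * (Y 2)⁻¹) * B ^ ε := by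
  refine ⟨2 ^ 40, by norm_num, fun a X Y B hB _ _ _ _ hY₁ _ hX hY q κ hq hq₂ _ hqa _ => ?_⟩
  have hB₀ : 0 ≤ B := by linarith
  have hpow : ∀ {e : ℝ} (k : ℕ), e = 1 / 180 * k → B ^ e = (B ^ ((1 : ℝ) / 180)) ^ k :=
    fun k he => he ▸ Real.rpow_mul_natCast hB₀ _ k
  rw [hpow (e := 1 / 5 - 1 / 60) 33 (by norm_num),
    hpow (e := 1 / 5 + 1 / 60) 39 (by norm_num)] at hX
  rw [hpow (e := 1 / 5 - 1 / 90) 34 (by norm_num),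
    hpow (e := 1 / 5 + 1 / 90) 38 (by norm_num)] at hY
  have hbound := ncard_SqK_le_of_pow_bounds (κ := κ)
    (Real.one_le_rpow (by linarith) (by norm_num)) hX hY hq hq₂ hqa
  have hratio : 0 ≤ Y 0 * Y 1 * (Y 2)⁻¹ := by
    have := hY₁ 0; have := hY₁ 1; have := hY₁ 2; positivity
  exact hbound.trans (le_mul_of_one_le_right (by positivity)
    (Real.one_le_rpow (by linarith) hε.le))
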